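/- Let n, k ∈ ℕ, let A ∈ ℝ^{2n×2k} be symplectic (Aᵀ J_{2n} A = J_{2k}) with A⁺ := J_{2k}ᵀ Aᵀ J_{2n}, and let u, v ∈ ℝ^{2n}. If A A⁺ u = u + v, then (A⁺ u)ᵀ J_{2k} (A⁺ v) = uᵀ J_{2n} v. -/
import Mathlib


open Matrix

/-- The `2m × 2m` Poisson matrix `[[0, I], [-I, 0]]`, indexed by `Fin m ⊕ Fin m`. -/
noncomputable def Jmat (m : ℕ) : Matrix (Fin m ⊕ Fin m) (Fin m ⊕ Fin m) ℝ :=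
  Matrix.fromBlocks 0 1 (-1) 0

lemma Jmat_mul_transpose (m : ℕ) : Jmat m * (Jmat m)ᵀ = 1 := by
  simp [Jmat, Matrix.fromBlocks_transpose, Matrix.fromBlocks_multiply,
    ← Matrix.fromBlocks_one]

lemma Jmat_transpose (m : ℕ) : (Jmat m)ᵀ = -(Jmat m) := by
  simp [Jmat, Matrix.fromBlocks_transpose, Matrix.fromBlocks_neg]

/-- For symplectic `A` with `A⁺ := J_{2k}ᵀ Aᵀ J_{2n}`: if `AA⁺u = u + v`, then
`ω(A⁺u, A⁺v) = Ω(u, v)`. -/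
theorem stmt10 (n k : ℕ) (A : Matrix (Fin n ⊕ Fin n) (Fin k ⊕ Fin k) ℝ)
    (hA : Aᵀ * Jmat n * A = Jmat k) (u v : Fin n ⊕ Fin n → ℝ)
    (h : A.mulVec (((Jmat k)ᵀ * Aᵀ * Jmat n).mulVec u) = u + v) :
    (((Jmat k)ᵀ * Aᵀ * Jmat n).mulVec u) ⬝ᵥ
        (Jmat k).mulVec (((Jmat k)ᵀ * Aᵀ * Jmat n).mulVec v)
      = u ⬝ᵥ (Jmat n).mulVec v := by
  have key : Jmat k * ((Jmat k)ᵀ * Aᵀ * Jmat n) = Aᵀ * (Jmat n) := by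
    rw [show (Jmat k)ᵀ * Aᵀ * Jmat n = (Jmat k)ᵀ * (Aᵀ * Jmat n) by rw [Matrix.mul_assoc],
      ← Matrix.mul_assoc, Jmat_mul_transpose, Matrix.one_mul]
  have hskew : v ⬝ᵥ (Jmat n).mulVec v = 0 := by
    have h1 : v ⬝ᵥ (Jmat n).mulVec v = ((Jmat n)ᵀ).mulVec v ⬝ᵥ v := by
      rw [Matrix.dotProduct_mulVec, ← Matrix.mulVec_transpose]
    rw [Jmat_transpose, Matrix.neg_mulVec, neg_dotProduct,
      dotProduct_comm] at h1
    rw [dotProduct_comm]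
    linarith
  calc
    (((Jmat k)ᵀ * Aᵀ * Jmat n).mulVec u) ⬝ᵥ
        (Jmat k).mulVec (((Jmat k)ᵀ * Aᵀ * Jmat n).mulVec v)
      = (((Jmat k)ᵀ * Aᵀ * Jmat n).mulVec u) ⬝ᵥ
          (Aᵀ).mulVec ((Jmat n).mulVec v) := by
        rw [Matrix.mulVec_mulVec, key, ← Matrix.mulVec_mulVec v Aᵀ (Jmat n)]
    _ = A.mulVec (((Jmat k)ᵀ * Aᵀ * Jmat n).mulVec u) ⬝ᵥ (Jmat n).mulVec v := by
        rw [Matrix.dotProduct_mulVec, Matrix.vecMul_transpose]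
    _ = (u + v) ⬝ᵥ (Jmat n).mulVec v := by rw [h]
    _ = u ⬝ᵥ (Jmat n).mulVec v := by
        rw [add_dotProduct, hskew, add_zero]
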